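/- Let G be an Eulerian graph of genus g with m edges and T a spanning tree of G. Then ec(G) = (1/(m·2^g)) Σ_{γ ∈ M₂(E^c(T))} (-1)^{σ(γ)} trace(A_γ^m), where σ(γ) is the number of nonzero coordinates of γ and A_γ is the twisted vertex adjacency matrix with respect to γ (with t=2, so entries are ±1 signed counts). -/

import Mathlib

open Finset Matrix

variable {V E : Type}

/-- Initial vertex of an oriented edge `(e, b)`; `b = true` means positively oriented. -/
def einit (vs vt : E → V) (a : E × Bool) : V := if a.2 then vs a.1 else vt a.1

/-- Terminal vertex of an oriented edge. -/
def eterm (vs vt : E → V) (a : E × Bool) : V := if a.2 then vt a.1 else vs a.1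

/-- Inverse (opposite) oriented edge. -/
def einv (a : E × Bool) : E × Bool := (a.1, !a.2)

/-- A closed walk of length `l` on the multigraph, recorded cyclically. -/
abbrev IsClosedWalk (vs vt : E → V) {l : ℕ} (a : ZMod l → E × Bool) : Prop :=
  ∀ i, eterm vs vt (a i) = einit vs vt (a (i + 1))

/-- A circuit: a closed walk without backtracks or tail. -/
abbrev IsCircuit (vs vt : E → V) {l : ℕ} (a : ZMod l → E × Bool) : Prop :=
  IsClosedWalk vs vt a ∧ ∀ i, a (i + 1) ≠ einv (a i)

/-- The abelianization of a closed walk, as an integer vector over edges. -/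
def abel [Fintype E] [DecidableEq E] {l : ℕ} [NeZero l]
    (a : ZMod l → E × Bool) (e : E) : ℤ :=
  ∑ i : ZMod l, if (a i).1 = e then (if (a i).2 then (1 : ℤ) else -1) else 0

/-- The vertex adjacency matrix (counting oriented edges from `v` to `w`). -/
def vertAdj [Fintype E] [DecidableEq V] (vs vt : E → V) : Matrix V V ℕ :=
  Matrix.of fun v w =>
    (univ.filter fun a : E × Bool => einit vs vt a = v ∧ eterm vs vt a = w).card

/-- Oriented edge `a` feeds into `b`. -/
abbrev Feeds (vs vt : E → V) (a b : E × Bool) : Prop :=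
  b ≠ einv a ∧ eterm vs vt a = einit vs vt b

/-- The edge adjacency matrix `W₁`. -/
def edgeAdj [DecidableEq V] [DecidableEq E] (vs vt : E → V) :
    Matrix (E × Bool) (E × Bool) ℕ :=
  Matrix.of fun a b => if Feeds vs vt a b then 1 else 0

/-- `ε_t = exp(2πi/t)`, a primitive `t`-th root of unity. -/
noncomputable def zetat (t : ℕ) : ℂ := Complex.exp (2 * Real.pi * Complex.I / t)

/-- The signed exponent `⟨γ, 1·e⟩` of an oriented edge. -/
def oexp {t : ℕ} (γ : E → ZMod t) (a : E × Bool) : ℤ :=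
  if a.2 then ((γ a.1).val : ℤ) else -((γ a.1).val : ℤ)

/-- The twisted vertex adjacency matrix `A_γ`. -/
noncomputable def twistedVertAdj [Fintype E] [DecidableEq V] (vs vt : E → V)
    (t : ℕ) (γ : E → ZMod t) : Matrix V V ℂ :=
  Matrix.of fun v w =>
    ∑ a : E × Bool, if einit vs vt a = v ∧ eterm vs vt a = w then zetat t ^ oexp γ a else 0

/-- The twisted edge adjacency matrix `W_{1,γ}`. -/
noncomputable def twistedEdgeAdj [DecidableEq V] [DecidableEq E] (vs vt : E → V)
    (t : ℕ) (γ : E → ZMod t) : Matrix (E × Bool) (E × Bool) ℂ :=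
  Matrix.of fun a b => if Feeds vs vt a b then zetat t ^ oexp γ a else 0

/-- The twisted vertex adjacency matrix for `t = 2`, with `±1` entries. -/
noncomputable def twistedVertAdj2 [Fintype E] [DecidableEq V] (vs vt : E → V)
    (γ : E → ZMod 2) : Matrix V V ℂ :=
  Matrix.of fun v w =>
    ∑ a : E × Bool, if einit vs vt a = v ∧ eterm vs vt a = w then (-1 : ℂ) ^ (γ a.1).val else 0

/-- Extension by zero of an element of `M_t(F)` to all edges. -/
def extF [DecidableEq E] {t : ℕ} (F : Finset E) (γ : {e : E // e ∈ F} → ZMod t) (e : E) :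
    ZMod t := if h : e ∈ F then γ ⟨e, h⟩ else 0

/-- Extension by zero of an element of `M_t(E^c(T))` to all edges. -/
def extC [DecidableEq E] {t : ℕ} (T : Finset E) (γ : {e : E // e ∉ T} → ZMod t) (e : E) :
    ZMod t := if h : e ∈ T then 0 else γ ⟨e, h⟩

/-- Reachability using only edges from the set `F` (edges traversable both ways). -/
def Reach (vs vt : E → V) (F : Finset E) : V → V → Prop :=
  Relation.ReflTransGen (fun v w => ∃ e ∈ F, (vs e = v ∧ vt e = w) ∨ (vs e = w ∧ vt e = v))

/-- Degree of a vertex (loops counted twice). -/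
def degree [Fintype E] [DecidableEq V] (vs vt : E → V) (v : V) : ℕ :=
  (univ.filter fun e => vs e = v).card + (univ.filter fun e => vt e = v).card

/-- `α` is an `R`-circulation: balanced at every vertex. -/
def IsCirc [Fintype E] [DecidableEq V] (vs vt : E → V) {R : Type} [AddCommMonoid R]
    (α : E → R) : Prop :=
  ∀ v, ∑ e ∈ univ.filter (fun e => vs e = v), α e = ∑ e ∈ univ.filter (fun e => vt e = v), α e

/-- `T` is a spanning tree: its edges connect all vertices and `|T| = |V| - 1`. -/
def IsSpanningTree [Fintype V] (vs vt : E → V) (T : Finset E) : Prop :=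
  (∀ v w : V, Reach vs vt T v w) ∧ T.card + 1 = Fintype.card V

/-- The vertex-edge incidence matrix. -/
def incidence (R : Type) [Ring R] [DecidableEq V] (vs vt : E → V) : Matrix V E R :=
  Matrix.of fun v e => (if vs e = v then (1 : R) else 0) - (if vt e = v then 1 else 0)

/-- An Eulerian circuit: a closed walk using every edge exactly once. -/
abbrev IsEulerianCircuit [Fintype E] (vs vt : E → V) (a : ZMod (Fintype.card E) → E × Bool) :
    Prop :=
  IsClosedWalk vs vt a ∧ Function.Bijective (fun i => (a i).1)

/-- Eulerian circuits up to cyclic rotation (Eulerian cycles). -/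
def eulSetoid [Fintype E] (vs vt : E → V) :
    Setoid {a : ZMod (Fintype.card E) → E × Bool // IsEulerianCircuit vs vt a} where
  r a b := ∃ k, ∀ i, b.1 i = a.1 (i + k)
  iseqv := by
    refine ⟨fun a => ⟨0, fun i => by rw [add_zero]⟩, ?_, ?_⟩
    · rintro a b ⟨k, h⟩
      exact ⟨-k, fun i => by rw [h (i + -k), neg_add_cancel_right]⟩
    · rintro a b c ⟨k, h⟩ ⟨k', h'⟩
      exact ⟨k' + k, fun i => by rw [h' i, h (i + k'), add_assoc]⟩

instance [Fintype E] [DecidableEq E] [DecidableEq V] [NeZero (Fintype.card E)]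
    (vs vt : E → V) : DecidableRel (eulSetoid vs vt).r :=
  fun a b => inferInstanceAs (Decidable (∃ k, ∀ i, b.1 i = a.1 (i + k)))

instance [Fintype E] [DecidableEq E] [DecidableEq V] [NeZero (Fintype.card E)]
    (vs vt : E → V) : Fintype (Quotient (eulSetoid vs vt)) :=
  @Quotient.fintype _ _ (eulSetoid vs vt)
    (fun a b => inferInstanceAs (Decidable (∃ k, ∀ i, b.1 i = a.1 (i + k))))

/-!
Writing `A_γ = B_γ C` with `B_γ` the signed "initial vertex" incidence and `C` the "terminal
vertex" incidence, `tr (A_γ^m) = tr ((C B_γ)^m)` is a signed count of closed walks of length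
`m` on oriented edges. Summing against `(-1)^σ(γ)` over `γ ∈ M₂(E^c(T))` keeps exactly the walks
using every cotree edge an odd number of times, each with weight `2^g`. For such a walk the
parity defect `usage + 1` is a `ℤ/2`-circulation (all degrees are even) supported on the spanning
tree, hence zero; so every edge is used, and a walk of length `m` using every edge is an Eulerian
circuit. Finally, each Eulerian cycle has exactly `m` distinct rotations.
-/
theorem Fin.snoc_eq_cons_add_one {ι : Type} {n : ℕ} (p : Fin n → ι) (x : ι) (i : Fin (n + 1)) :
    Fin.snoc (α := fun _ => ι) p x i = Fin.cons (α := fun _ => ι) x p (i + 1) := by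
  induction i using Fin.lastCases with
  | last => simp
  | cast j => simp

section TracePow

variable {ι R : Type} [Fintype ι] [DecidableEq ι] [CommSemiring R]

theorem Matrix.pow_succ_apply_eq_sum_paths (M : Matrix ι ι R) (n : ℕ) (x y : ι) :
    (M ^ (n + 1)) x y = ∑ p : Fin n → ι, ∏ i : Fin (n + 1),
      M (Fin.cons (α := fun _ => ι) x p i) (Fin.snoc (α := fun _ => ι) p y i) := by
  induction n generalizing x with
  | zero => simp [Fin.snoc_zero]
  | succ n ih =>
    rw [pow_succ', mul_apply, ← (Fin.consEquiv fun _ => ι).sum_comp, Fintype.sum_prod_type]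
    refine sum_congr rfl fun z _ => ?_
    simp only [ih, mul_sum]
    refine sum_congr rfl fun p _ => ?_
    change _ = ∏ i : Fin (n + 2), M (Fin.cons (α := fun _ => ι) x (Fin.cons z p) i)
      (Fin.snoc (α := fun _ => ι) (Fin.cons z p) y i)
    rw [← Fin.cons_snoc_eq_snoc_cons, Fin.prod_univ_succ (n := n + 1)]
    simp only [Fin.cons_zero, Fin.cons_succ]

theorem Matrix.trace_pow_succ_eq_sum_cycles (M : Matrix ι ι R) (n : ℕ) :
    trace (M ^ (n + 1)) = ∑ q : Fin (n + 1) → ι, ∏ i, M (q i) (q (i + 1)) := by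
  simp only [trace, Matrix.diag, pow_succ_apply_eq_sum_paths, Fin.snoc_eq_cons_add_one]
  rw [← (Fin.consEquiv fun _ => ι).sum_comp, Fintype.sum_prod_type]
  rfl

theorem Matrix.trace_pow_eq_sum_cycles (M : Matrix ι ι R) (l : ℕ) [NeZero l] :
    trace (M ^ l) = ∑ q : ZMod l → ι, ∏ i, M (q i) (q (i + 1)) := by
  obtain ⟨n, rfl⟩ := Nat.exists_eq_succ_of_ne_zero (NeZero.ne l)
  exact trace_pow_succ_eq_sum_cycles M n

theorem Matrix.trace_mul_pow_comm {κ : Type} [Fintype κ] [DecidableEq κ]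
    (B : Matrix ι κ R) (C : Matrix κ ι R) (l : ℕ) [NeZero l] :
    trace ((B * C) ^ l) = trace ((C * B) ^ l) := by
  obtain ⟨n, rfl⟩ := Nat.exists_eq_succ_of_ne_zero (NeZero.ne l)
  have h : (B * C) ^ (n + 1) = B * (C * B) ^ n * C := by
    induction n with
    | zero => simp
    | succ n ih => rw [pow_succ, ih, pow_succ]; simp only [Matrix.mul_assoc]
  rw [h, trace_mul_comm, ← Matrix.mul_assoc, ← pow_succ']

end TracePow

section Walks

variable {V E : Type} [DecidableEq V] (vs vt : E → V)

noncomputable def signedInitIncidence (γ : E → ZMod 2) : Matrix V (E × Bool) ℂ :=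
  of fun v a => if einit vs vt a = v then (-1 : ℂ) ^ (γ a.1).val else 0

noncomputable def termIncidence : Matrix (E × Bool) V ℂ :=
  of fun a w => if eterm vs vt a = w then 1 else 0

theorem twistedVertAdj2_eq_mul [Fintype E] (γ : E → ZMod 2) :
    twistedVertAdj2 vs vt γ = signedInitIncidence vs vt γ * termIncidence vs vt := by
  ext v w
  simp only [twistedVertAdj2, signedInitIncidence, termIncidence, mul_apply, of_apply,
    mul_ite, mul_one, mul_zero, ite_and]
  exact sum_congr rfl fun a _ => by split_ifs <;> rfl

theorem termIncidence_mul_signedInitIncidence_apply [Fintype V] (γ : E → ZMod 2)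
    (a b : E × Bool) :
    (termIncidence vs vt * signedInitIncidence vs vt γ) a b =
      if eterm vs vt a = einit vs vt b then (-1 : ℂ) ^ (γ b.1).val else 0 := by
  simp [termIncidence, signedInitIncidence, mul_apply, eq_comm]

theorem trace_twistedVertAdj2_pow [Fintype V] [Fintype E] [DecidableEq E] (γ : E → ZMod 2)
    (l : ℕ) [NeZero l] :
    trace (twistedVertAdj2 vs vt γ ^ l) = ∑ a : ZMod l → E × Bool,
      if IsClosedWalk vs vt a then ∏ t, (-1 : ℂ) ^ (γ (a t).1).val else 0 := by
  rw [twistedVertAdj2_eq_mul, trace_mul_pow_comm, trace_pow_eq_sum_cycles]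
  refine sum_congr rfl fun a _ => ?_
  simp only [termIncidence_mul_signedInitIncidence_apply, Fintype.prod_ite_zero]
  exact if_congr Iff.rfl
    (Equiv.prod_comp (Equiv.addRight (1 : ZMod l)) fun t => (-1 : ℂ) ^ (γ (a t).1).val) rfl

end Walks

section CharacterSum

variable {ι E : Type} [Fintype ι] [DecidableEq E]

def usage (a : ι → E × Bool) (e : E) : ℕ := #{t | (a t).1 = e}

theorem prod_comp_fst_eq_prod_pow_usage [Fintype E] {M : Type} [CommMonoid M]
    (a : ι → E × Bool) (h : E → M) : ∏ t, h (a t).1 = ∏ e, h e ^ usage a e := by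
  rw [← prod_fiberwise univ (fun t => (a t).1)]
  exact prod_congr rfl fun e _ => prod_eq_pow_card fun t ht => by rw [(mem_filter.mp ht).2]

theorem usage_eq_one_of_bijective {a : ι → E × Bool}
    (ha : Function.Bijective fun t => (a t).1) (e : E) : usage a e = 1 := by
  obtain ⟨t, rfl⟩ := ha.2 e
  exact card_eq_one.mpr ⟨t, by ext s; simp [ha.1.eq_iff]⟩

theorem bijective_of_usage_ne_zero [Fintype E] (hcard : Fintype.card ι = Fintype.card E)
    {a : ι → E × Bool} (ha : ∀ e, usage a e ≠ 0) : Function.Bijective fun t => (a t).1 := by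
  refine (Fintype.bijective_iff_surjective_and_card _).mpr ⟨fun e => ?_, hcard⟩
  obtain ⟨t, ht⟩ := card_ne_zero.mp (ha e)
  exact ⟨t, (mem_filter.mp ht).2⟩

theorem sum_zmod_two_neg_one_pow (n : ℕ) :
    ∑ x : ZMod 2, ((-1 : ℂ) ^ x.val) ^ (n + 1) = if Odd n then 2 else 0 := by
  rw [show (univ : Finset (ZMod 2)) = {0, 1} from rfl, sum_pair zero_ne_one,
    show (1 : ZMod 2).val = 1 from rfl, ZMod.val_zero, pow_one, pow_zero, one_pow]
  rcases Nat.even_or_odd n with h | h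
  · rw [h.add_one.neg_one_pow, if_neg (Nat.not_odd_iff_even.mpr h), add_neg_cancel]
  · rw [h.add_one.neg_one_pow, if_pos h, one_add_one_eq_two]

/-- The sign `(-1)^σ(γ)` shifts every exponent by one, so only the characters with all
exponents odd survive the sum over `M₂(S)`. -/
theorem sum_neg_one_pow_card_support_mul_prod {S : Type} [Fintype S] [DecidableEq S]
    (u : S → ℕ) :
    ∑ γ : S → ZMod 2, (-1 : ℂ) ^ #{s | γ s ≠ 0} * ∏ s, ((-1 : ℂ) ^ (γ s).val) ^ u s =
      if ∀ s, Odd (u s) then 2 ^ Fintype.card S else 0 := by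
  have hsign (γ : S → ZMod 2) : (-1 : ℂ) ^ #{s | γ s ≠ 0} = ∏ s, (-1 : ℂ) ^ (γ s).val := by
    rw [prod_pow_eq_pow_sum, card_filter]
    congr 1
    exact sum_congr rfl fun s _ => by generalize γ s = x; revert x; decide
  simp_rw [hsign, ← prod_mul_distrib, ← pow_succ', ← Fintype.prod_sum (fun s (x : ZMod 2) =>
    ((-1 : ℂ) ^ x.val) ^ (u s + 1)), sum_zmod_two_neg_one_pow, Fintype.prod_ite_zero, prod_const,
    card_univ]

end CharacterSum

section Circulation

variable {V E : Type} [Fintype E] [DecidableEq V] {vs vt : E → V}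

theorem IsCirc.add {R : Type} [AddCommMonoid R] {α β : E → R} (hα : IsCirc vs vt α)
    (hβ : IsCirc vs vt β) : IsCirc vs vt (α + β) := fun v => by
  simp only [Pi.add_apply, sum_add_distrib, hα v, hβ v]

theorem isCirc_natCast_of_even {α : E → ℕ}
    (h : ∀ v, Even (∑ e with vs e = v, α e + ∑ e with vt e = v, α e)) :
    IsCirc vs vt fun e => (α e : ZMod 2) := fun v => by
  simp only [← Nat.cast_sum, ZMod.natCast_eq_natCast_iff']
  obtain ⟨k, hk⟩ := h v
  omega

theorem isCirc_one_of_even_degree (hEul : ∀ v, Even (degree vs vt v)) :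
    IsCirc vs vt fun _ => (1 : ZMod 2) := by
  simpa using isCirc_natCast_of_even (α := fun _ => 1) (by simpa [degree] using hEul)

theorem sum_usage_filter {ι : Type} [Fintype ι] [DecidableEq E] (a : ι → E × Bool) (p : E → Prop)
    [DecidablePred p] : ∑ e with p e, usage a e = #{t | p (a t).1} := by
  simp only [usage, card_filter]
  rw [sum_comm]
  exact sum_congr rfl fun t _ => by simp

theorem IsClosedWalk.isCirc_usage [DecidableEq E] {l : ℕ} [NeZero l] {a : ZMod l → E × Bool}
    (ha : IsClosedWalk vs vt a) : IsCirc vs vt fun e => (usage a e : ZMod 2) := by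
  refine isCirc_natCast_of_even fun v => ⟨#{t | einit vs vt (a t) = v}, ?_⟩
  have hends (t : ZMod l) :
      (if vs (a t).1 = v then 1 else 0) + (if vt (a t).1 = v then 1 else 0) =
        (if einit vs vt (a t) = v then 1 else 0) + (if einit vs vt (a (t + 1)) = v then 1 else 0) := by
    rw [← ha t]
    obtain ⟨e, _ | _⟩ := a t <;> simp [einit, eterm, add_comm]
  rw [sum_usage_filter, sum_usage_filter, card_filter, card_filter, card_filter, ← sum_add_distrib,
    sum_congr rfl fun t _ => hends t, sum_add_distrib]
  exact congrArg _ (Fintype.sum_equiv (Equiv.addRight 1) _ _ fun _ => rfl)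

end Circulation

section Tree

variable {V E : Type} {vs vt : E → V}

theorem Reach.symm {F : Finset E} {v w : V} (hr : Reach vs vt F v w) : Reach vs vt F w v :=
  (Relation.reflTransGen_swap.mpr hr).lift id fun _ _ ⟨e, he, hends⟩ => ⟨e, he, hends.symm⟩

theorem Reach.erase [DecidableEq E] {F : Finset E} {v w : V} (hr : Reach vs vt F v w) {e₀ : E}
    (hdet : Reach vs vt (F.erase e₀) (vs e₀) (vt e₀)) :
    Reach vs vt (F.erase e₀) v w := by
  induction hr with
  | refl => exact .refl
  | tail _ hstep ih =>
    obtain ⟨e, he, hends⟩ := hstep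
    by_cases hee : e = e₀
    · subst hee
      rcases hends with ⟨rfl, rfl⟩ | ⟨rfl, rfl⟩
      · exact ih.trans hdet
      · exact ih.trans hdet.symm
    · exact ih.tail ⟨e, mem_erase.mpr ⟨hee, he⟩, hends⟩

theorem card_le_card_add_one_of_reach [Fintype V] {F : Finset E}
    (hF : ∀ v w, Reach vs vt F v w) : Fintype.card V ≤ F.card + 1 := by
  classical
  rcases isEmpty_or_nonempty V with hV | hV
  · simp
  let G := SimpleGraph.fromRel fun v w => ∃ e ∈ F, vs e = v ∧ vt e = w
  have hconn : G.Connected := by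
    refine .mk fun v w => ?_
    induction hF v w with
    | refl => rfl
    | @tail b c _ hstep ih =>
      by_cases hbc : b = c
      · rwa [← hbc]
      obtain ⟨e, he, hends⟩ := hstep
      refine ih.trans (SimpleGraph.Adj.reachable ?_)
      rw [SimpleGraph.fromRel_adj]
      rcases hends with ⟨rfl, rfl⟩ | ⟨rfl, rfl⟩
      · exact ⟨hbc, .inl ⟨e, he, rfl, rfl⟩⟩
      · exact ⟨hbc, .inr ⟨e, he, rfl, rfl⟩⟩
  have hedges : G.edgeSet ⊆ ↑(F.image fun e => s(vs e, vt e)) := by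
    intro z hz
    induction z using Sym2.ind with
    | _ v w =>
    rw [SimpleGraph.mem_edgeSet, SimpleGraph.fromRel_adj] at hz
    obtain ⟨-, ⟨e, he, rfl, rfl⟩ | ⟨e, he, rfl, rfl⟩⟩ := hz
    · exact mem_image.mpr ⟨e, he, rfl⟩
    · exact mem_image.mpr ⟨e, he, Sym2.eq_swap⟩
  calc Fintype.card V = Nat.card V := Nat.card_eq_fintype_card.symm
    _ ≤ Nat.card G.edgeSet + 1 := hconn.card_vert_le_card_edgeSet_add_one
    _ ≤ (F.image fun e => s(vs e, vt e)).card + 1 := by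
      rw [Nat.card_coe_set_eq, ← Set.ncard_coe_finset]
      exact Nat.add_le_add_right (Set.ncard_le_ncard hedges) 1
    _ ≤ F.card + 1 := Nat.add_le_add_right card_image_le 1

variable [Fintype E] [DecidableEq V]

theorem IsCirc.sum_filter_mem_eq {R : Type} [AddCommMonoid R] {β : E → R}
    (hβ : IsCirc vs vt β) (C : Finset V) :
    ∑ e with vs e ∈ C, β e = ∑ e with vt e ∈ C, β e := by
  have hfib (f : E → V) : ∑ e with f e ∈ C, β e = ∑ v ∈ C, ∑ e with f e = v, β e := by
    simp only [sum_filter]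
    rw [sum_comm]
    exact sum_congr rfl fun e _ => (sum_ite_eq C (f e) fun _ => β e).symm
  rw [hfib, hfib, sum_congr rfl fun v _ => hβ v]

/-- The cut around the component of `vs e₀` in `F.erase e₀` is crossed by no edge of
`F.erase e₀`; if it separated the ends of `e₀`, the flow of `β` across it would be `β e₀ ≠ 0`. -/
theorem IsCirc.reach_erase [Fintype V] [DecidableEq E] {R : Type} [AddCommGroup R] {β : E → R}
    (hβ : IsCirc vs vt β) {F : Finset E} (hF : ∀ e ∉ F, β e = 0) {e₀ : E} (he₀ : β e₀ ≠ 0) :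
    Reach vs vt (F.erase e₀) (vs e₀) (vt e₀) := by
  classical
  set C : Finset V := {w | Reach vs vt (F.erase e₀) (vs e₀) w}
  have hvs : vs e₀ ∈ C := mem_filter.mpr ⟨mem_univ _, .refl⟩
  suffices vt e₀ ∈ C from (mem_filter.mp this).2
  by_contra hvt
  have hcross (e : E) : ((if vs e ∈ C then β e else 0) - if vt e ∈ C then β e else 0) =
      if e = e₀ then β e₀ else 0 := by
    by_cases hee : e = e₀
    · subst hee
      simp [hvs, hvt]
    by_cases hβe : β e = 0
    · simp [hβe, hee]
    have he : e ∈ F.erase e₀ := mem_erase.mpr ⟨hee, by_contra fun h => hβe (hF e h)⟩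
    have hends : vs e ∈ C ↔ vt e ∈ C := by
      simp only [C, mem_filter, mem_univ, true_and]
      exact ⟨fun h => h.tail ⟨e, he, .inl ⟨rfl, rfl⟩⟩, fun h => h.tail ⟨e, he, .inr ⟨rfl, rfl⟩⟩⟩
    simp only [hends, sub_self, if_neg hee]
  have hflow := hβ.sum_filter_mem_eq C
  rw [sum_filter, sum_filter, ← sub_eq_zero, ← sum_sub_distrib, sum_congr rfl fun e _ => hcross e,
    sum_ite_eq' univ e₀, if_pos (mem_univ _)] at hflow
  exact he₀ hflow

theorem IsCirc.eq_zero_of_isSpanningTree [Fintype V] [DecidableEq E] {R : Type} [AddCommGroup R]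
    {β : E → R} (hβ : IsCirc vs vt β) {T : Finset E} (hT : IsSpanningTree vs vt T)
    (hsupp : ∀ e ∉ T, β e = 0) : β = 0 := by
  by_contra hne
  obtain ⟨e₀, he₀⟩ := Function.ne_iff.mp hne
  have he₀T : e₀ ∈ T := by_contra fun h => he₀ (hsupp e₀ h)
  have hconn (v w : V) : Reach vs vt (T.erase e₀) v w := (hT.1 v w).erase (hβ.reach_erase hsupp he₀)
  have := card_le_card_add_one_of_reach hconn
  rw [card_erase_of_mem he₀T] at this
  have := card_pos.mpr ⟨e₀, he₀T⟩
  have := hT.2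
  omega

end Tree

section Euler

variable {V E : Type} [Fintype E] {vs vt : E → V}

theorem IsEulerianCircuit.rotate {a : ZMod (Fintype.card E) → E × Bool}
    (ha : IsEulerianCircuit vs vt a) (k : ZMod (Fintype.card E)) :
    IsEulerianCircuit vs vt fun i => a (i + k) := by
  refine ⟨fun i => by simpa only [add_right_comm] using ha.1 (i + k), ?_⟩
  exact ha.2.comp (Equiv.addRight k).bijective

variable [NeZero (Fintype.card E)] [DecidableEq E] [DecidableEq V]

theorem card_eulerianCircuit_eq :
    Fintype.card {a // IsEulerianCircuit vs vt a} =
      Fintype.card (Quotient (eulSetoid vs vt)) * Fintype.card E := by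
  let rot (b : {a // IsEulerianCircuit vs vt a}) (k : ZMod (Fintype.card E)) :
      {a // IsEulerianCircuit vs vt a} := ⟨fun i => b.1 (i + k), b.2.rotate k⟩
  have hfiber (b : {a // IsEulerianCircuit vs vt a}) :
      #{a | Quotient.mk (eulSetoid vs vt) a = Quotient.mk _ b} = Fintype.card E := by
    have hinj : Function.Injective (rot b) := fun k k' h => by
      simpa using b.2.2.1 (congrArg (fun a => (a.1 0).1) h)
    have himage : ({a | Quotient.mk (eulSetoid vs vt) a = Quotient.mk _ b} : Finset _) =
        univ.image (rot b) := by
      ext a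
      rw [mem_filter, eq_comm, Quotient.eq, mem_image]
      simp only [mem_univ, true_and]
      exact exists_congr fun k => by simp [rot, Subtype.ext_iff, funext_iff, eq_comm]
    rw [himage, card_image_of_injective _ hinj, card_univ, ZMod.card]
  rw [← card_univ, card_eq_sum_card_fiberwise fun a _ => mem_univ (Quotient.mk (eulSetoid vs vt) a),
    sum_congr rfl fun q _ => ?_, sum_const, card_univ, smul_eq_mul]
  obtain ⟨b, rfl⟩ := Quotient.exists_rep q
  exact hfiber b

variable [Fintype V]

theorem IsClosedWalk.bijective_iff_odd_usage (hEul : ∀ v, Even (degree vs vt v)) {T : Finset E}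
    (hT : IsSpanningTree vs vt T) {a : ZMod (Fintype.card E) → E × Bool}
    (ha : IsClosedWalk vs vt a) :
    Function.Bijective (fun t => (a t).1) ↔ ∀ e : {e // e ∉ T}, Odd (usage a e) := by
  refine ⟨fun hbij e => by rw [usage_eq_one_of_bijective hbij]; exact odd_one, fun hodd => ?_⟩
  have hdefect := (ha.isCirc_usage.add (isCirc_one_of_even_degree hEul)).eq_zero_of_isSpanningTree
    hT fun e he => by
      simp [ZMod.natCast_eq_one_iff_odd.mpr (hodd ⟨e, he⟩), CharTwo.add_self_eq_zero]
  refine bijective_of_usage_ne_zero (ZMod.card _) fun e he => ?_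
  simpa [he] using congrFun hdefect e

end Euler

section ClosedWalkSum

variable {V E : Type} [Fintype V] [Fintype E] [DecidableEq V] [DecidableEq E] {vs vt : E → V}

theorem prod_neg_one_pow_extC (T : Finset E) (γ : {e // e ∉ T} → ZMod 2) {ι : Type} [Fintype ι]
    (a : ι → E × Bool) :
    ∏ t, (-1 : ℂ) ^ (extC T γ (a t).1).val = ∏ e, ((-1 : ℂ) ^ (γ e).val) ^ usage a e := by
  rw [prod_comp_fst_eq_prod_pow_usage a fun e => (-1 : ℂ) ^ (extC T γ e).val,
    ← Fintype.prod_subtype_mul_prod_subtype (· ∈ T)]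
  have hT (e : {e // e ∈ T}) : extC T γ e = 0 := dif_pos e.2
  have hTc (e : {e // e ∉ T}) : extC T γ e = γ e := dif_neg e.2
  simp [hT, hTc]

theorem sum_neg_one_pow_mul_closedWalk_weight [NeZero (Fintype.card E)]
    (hEul : ∀ v, Even (degree vs vt v)) {T : Finset E} (hT : IsSpanningTree vs vt T)
    (a : ZMod (Fintype.card E) → E × Bool) :
    ∑ γ : {e // e ∉ T} → ZMod 2, (-1 : ℂ) ^ #{e | γ e ≠ 0} *
        (if IsClosedWalk vs vt a then ∏ t, (-1 : ℂ) ^ (extC T γ (a t).1).val else 0) =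
      if IsEulerianCircuit vs vt a then 2 ^ Fintype.card {e // e ∉ T} else 0 := by
  by_cases ha : IsClosedWalk vs vt a
  · simp only [if_pos ha, prod_neg_one_pow_extC, sum_neg_one_pow_card_support_mul_prod,
      ← ha.bijective_iff_odd_usage hEul hT]
    exact if_congr (and_iff_right ha).symm rfl rfl
  · simp [ha, IsEulerianCircuit]

end ClosedWalkSum

theorem stmt14 {V E : Type} [Fintype V] [Fintype E] [DecidableEq V] [DecidableEq E]
    (vs vt : E → V) [NeZero (Fintype.card E)]
    (hEul : ∀ v, Even (degree vs vt v))
    (T : Finset E) (hT : IsSpanningTree vs vt T)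
    (g : ℕ) (hg : g + Fintype.card V = Fintype.card E + 1) :
    (Fintype.card (Quotient (eulSetoid vs vt)) : ℂ) =
      (1 / ((Fintype.card E : ℂ) * 2 ^ g)) *
        ∑ γ : {e : E // e ∉ T} → ZMod 2,
          (-1 : ℂ) ^ (Finset.univ.filter fun e : {e : E // e ∉ T} => γ e ≠ 0).card *
            Matrix.trace ((twistedVertAdj2 vs vt (extC T γ)) ^ (Fintype.card E)) := by
  have hcotree : Fintype.card {e // e ∉ T} = g := by
    rw [Fintype.card_subtype_compl, Fintype.card_coe]
    have := hT.2
    omega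
  have hsum : ∑ γ : {e // e ∉ T} → ZMod 2, (-1 : ℂ) ^ #{e | γ e ≠ 0} *
      trace (twistedVertAdj2 vs vt (extC T γ) ^ Fintype.card E) =
        Fintype.card {a // IsEulerianCircuit vs vt a} * 2 ^ g := by
    simp_rw [trace_twistedVertAdj2_pow, mul_sum]
    rw [sum_comm, sum_congr rfl fun a _ => sum_neg_one_pow_mul_closedWalk_weight hEul hT a,
      ← sum_filter, sum_const, ← Fintype.card_subtype, hcotree, nsmul_eq_mul]
  have hm : (Fintype.card E : ℂ) ≠ 0 := Nat.cast_ne_zero.mpr (NeZero.ne _)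
  rw [hsum, card_eulerianCircuit_eq]
  push_cast
  field_simp
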